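/- arXiv:2605.01063 — 2 statements merged into one kernel-verified Lean document; each statement's English description precedes it below -/
import Mathlib

section
/- Let E be a real inner product space, C ≥ 1, and let μ₁, …, μ_C ∈ E with global mean μ_G = (1/C) ∑_{c=1}^C μ_c. Assume the class means are equinorm (‖μ_i‖ = ‖μ_j‖ for all i, j) and the centered class means are equinorm (‖μ_i − μ_G‖ = ‖μ_j − μ_G‖ for all i, j). Then for every c, the inner product ⟨μ_G, μ_c − μ_G⟩ = 0; in particular, whenever μ_G ≠ 0 and μ_c ≠ μ_G, the cosine similarity between μ_G and μ_c − μ_G is 0. -/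
/-!
Expanding `‖μ i - μG‖² = ‖μ i‖² - 2⟪μ i, μG⟫ + ‖μG‖²` shows that `⟪μ i, μG⟫` does not depend
on `i`; averaging over `i` identifies this common value with `⟪μG, μG⟫`.
-/

open scoped RealInnerProductSpace

section

variable {E : Type*} [NormedAddCommGroup E] [InnerProductSpace ℝ E]

theorem real_inner_eq_of_norm_eq_of_norm_sub_eq {x y m : E} (hnorm : ‖x‖ = ‖y‖)
    (hsub : ‖x - m‖ = ‖y - m‖) : ⟪x, m⟫ = ⟪y, m⟫ := by
  have hsq : ‖x - m‖ ^ 2 = ‖y - m‖ ^ 2 := by rw [hsub]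
  rw [norm_sub_sq_real, norm_sub_sq_real, hnorm] at hsq
  linarith

theorem real_inner_average_eq_of_forall_inner_eq {ι : Type*} [Fintype ι] {μ : ι → E} {v : E}
    (h : ∀ i j, ⟪μ i, v⟫ = ⟪μ j, v⟫) (c : ι) :
    ⟪(Fintype.card ι : ℝ)⁻¹ • ∑ i, μ i, v⟫ = ⟪μ c, v⟫ := by
  have hcard : (Fintype.card ι : ℝ) ≠ 0 :=
    Nat.cast_ne_zero.mpr (Fintype.card_pos_iff.mpr ⟨c⟩).ne'
  rw [real_inner_smul_left, sum_inner, Finset.sum_congr rfl fun i _ => h i c, Finset.sum_const,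
    Finset.card_univ, nsmul_eq_mul, inv_mul_cancel_left₀ hcard]

end

theorem global_mean_orthogonal_centered_general {E : Type*} [NormedAddCommGroup E]
    [InnerProductSpace ℝ E] (C : ℕ) (μ : Fin C → E)
    (μG : E) (hμG : μG = (C : ℝ)⁻¹ • ∑ c, μ c)
    (heq : ∀ i j, ‖μ i‖ = ‖μ j‖)
    (heqc : ∀ i j, ‖μ i - μG‖ = ‖μ j - μG‖) :
    ∀ c, (inner ℝ μG (μ c - μG) : ℝ) = 0 ∧
      (μG ≠ 0 → μ c ≠ μG →
        (inner ℝ μG (μ c - μG) : ℝ) / (‖μG‖ * ‖μ c - μG‖) = 0) := by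
  intro c
  have hconst : ∀ i j, ⟪μ i, μG⟫ = ⟪μ j, μG⟫ := fun i j =>
    real_inner_eq_of_norm_eq_of_norm_sub_eq (heq i j) (heqc i j)
  have hself : ⟪μG, μG⟫ = ⟪μ c, μG⟫ := by
    simpa only [Fintype.card_fin, ← hμG] using real_inner_average_eq_of_forall_inner_eq hconst c
  have horth : ⟪μG, μ c - μG⟫ = 0 := by
    rw [inner_sub_right, real_inner_comm (μ c), ← hself, sub_self]
  exact ⟨horth, fun _ _ => by rw [horth, zero_div]⟩

/-- Theorem 1(2): if the class means are equinorm and the centered class means are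
equinorm, then the global mean `μ_G` is orthogonal to every centered class mean
`μ_c - μ_G`; in particular the cosine similarity between `μ_G` and `μ_c - μ_G`
vanishes whenever both are nonzero. -/
theorem global_mean_orthogonal_centered {E : Type*} [NormedAddCommGroup E]
    [InnerProductSpace ℝ E] (C : ℕ) (hC : 1 ≤ C) (μ : Fin C → E)
    (μG : E) (hμG : μG = (C : ℝ)⁻¹ • ∑ c, μ c)
    (heq : ∀ i j, ‖μ i‖ = ‖μ j‖)
    (heqc : ∀ i j, ‖μ i - μG‖ = ‖μ j - μG‖) :
    ∀ c, (inner ℝ μG (μ c - μG) : ℝ) = 0 ∧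
      (μG ≠ 0 → μ c ≠ μG →
        (inner ℝ μG (μ c - μG) : ℝ) / (‖μG‖ * ‖μ c - μG‖) = 0) :=
  global_mean_orthogonal_centered_general C μ μG hμG heq heqc
end

section
/- Let p ≥ 1, fix a nonzero vector μ ∈ ℝ^p and real constants α and r_id. Define s(h) = ⟨h, μ⟩ / (‖h‖·‖μ‖) for h ≠ 0, and L(h) = (‖h‖ − s(h)²·α·r_id)². Then L is differentiable at every h ≠ 0, and writing r = ‖h‖, ĥ = h/r, s = s(h), and t = s²·α·r_id, its gradient is ∇L(h) = 2(r − t)·ĥ − (4·s·(r − t)·α·r_id / (r·‖μ‖)) · (μ − s·‖μ‖·ĥ). -/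
/-!
With `r = ‖h‖` and `ĥ = r⁻¹ • h`, one has `∇‖·‖ = ĥ`, and the quotient rule gives
`∇s = (r‖μ‖)⁻¹ • (μ - s‖μ‖ • ĥ)`, the component of `μ` orthogonal to `h` rescaled. The gradient of
`L = (r - s²·α·r_id)²` is then the chain rule: `2(r - t) • (ĥ - 2s·α·r_id • ∇s)`.
-/

open scoped RealInnerProductSpace

section GradientCalculus

variable {F : Type*} [NormedAddCommGroup F] [InnerProductSpace ℝ F] [CompleteSpace F]
  {f g : F → ℝ} {f' g' μ x : F}

theorem HasDerivAt.comp_hasGradientAt {φ : ℝ → ℝ} {φ' : ℝ} (hφ : HasDerivAt φ φ' (f x))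
    (hf : HasGradientAt f f' x) : HasGradientAt (fun y => φ (f y)) (φ' • f') x := by
  rw [hasGradientAt_iff_hasFDerivAt] at hf ⊢
  exact (hφ.comp_hasFDerivAt x hf).congr_fderiv (map_smul _ _ _).symm

theorem HasGradientAt.sub (hf : HasGradientAt f f' x) (hg : HasGradientAt g g' x) :
    HasGradientAt (fun y => f y - g y) (f' - g') x := by
  rw [hasGradientAt_iff_hasFDerivAt] at hf hg ⊢
  exact (hf.sub hg).congr_fderiv (map_sub _ _ _).symm

theorem HasGradientAt.mul (hf : HasGradientAt f f' x) (hg : HasGradientAt g g' x) :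
    HasGradientAt (fun y => f y * g y) (f x • g' + g x • f') x := by
  rw [hasGradientAt_iff_hasFDerivAt] at hf hg ⊢
  exact (hf.mul hg).congr_fderiv (by simp only [map_add, map_smul])

theorem HasGradientAt.mul_const (hf : HasGradientAt f f' x) (c : ℝ) :
    HasGradientAt (fun y => f y * c) (c • f') x := by
  simpa using hf.mul (hasGradientAt_const x c)

theorem HasGradientAt.div (hf : HasGradientAt f f' x) (hg : HasGradientAt g g' x) (hgx : g x ≠ 0) :
    HasGradientAt (fun y => f y / g y) ((g x ^ 2)⁻¹ • (g x • f' - f x • g')) x := by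
  simp only [div_eq_mul_inv]
  convert hf.mul ((hasDerivAt_inv hgx).comp_hasGradientAt hg) using 1
  match_scalars <;> field_simp

theorem hasGradientAt_norm (hx : x ≠ 0) : HasGradientAt (‖·‖) (‖x‖⁻¹ • x) x := by
  have hsq := (hasStrictFDerivAt_norm_sq x).hasFDerivAt.sqrt (by positivity)
  simp only [Real.sqrt_sq (norm_nonneg _)] at hsq
  rw [hasGradientAt_iff_hasFDerivAt]
  refine hsq.congr_fderiv ?_
  ext v
  simp only [smul_apply, coe_innerSL_apply, map_smul,
    InnerProductSpace.toDual_apply_apply, nsmul_eq_mul, Nat.cast_ofNat, smul_eq_mul]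
  field_simp

theorem hasGradientAt_inner_left (μ x : F) : HasGradientAt (fun y => ⟪y, μ⟫) μ x := by
  rw [hasGradientAt_iff_hasFDerivAt]
  exact ((innerSL ℝ μ).hasFDerivAt (x := x)).congr_of_eventuallyEq (by simp [real_inner_comm])

noncomputable def cosineSimilarity (μ x : F) : ℝ := ⟪x, μ⟫ / (‖x‖ * ‖μ‖)

theorem hasGradientAt_cosineSimilarity (hμ : μ ≠ 0) (hx : x ≠ 0) :
    HasGradientAt (cosineSimilarity μ)
      ((‖x‖ * ‖μ‖)⁻¹ • (μ - (cosineSimilarity μ x * ‖μ‖) • (‖x‖⁻¹ • x))) x := by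
  have hx' : ‖x‖ ≠ 0 := norm_ne_zero_iff.mpr hx
  have hμ' : ‖μ‖ ≠ 0 := norm_ne_zero_iff.mpr hμ
  show HasGradientAt (fun y => ⟪y, μ⟫ / (‖y‖ * ‖μ‖)) _ x
  convert (hasGradientAt_inner_left μ x).div ((hasGradientAt_norm hx).mul_const ‖μ‖)
    (mul_ne_zero hx' hμ') using 1
  rw [cosineSimilarity]
  match_scalars <;> field_simp

noncomputable def adaptiveNormLoss (μ : F) (α r_id : ℝ) (h : F) : ℝ :=
  (‖h‖ - cosineSimilarity μ h ^ 2 * α * r_id) ^ 2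

theorem hasGradientAt_adaptiveNormLoss (hμ : μ ≠ 0) (hx : x ≠ 0) (α r_id : ℝ) :
    HasGradientAt (adaptiveNormLoss μ α r_id)
      (let r := ‖x‖; let s := cosineSimilarity μ x; let t := s ^ 2 * α * r_id
        (2 * (r - t)) • (r⁻¹ • x) -
          (4 * s * (r - t) * α * r_id / (r * ‖μ‖)) • (μ - (s * ‖μ‖) • (r⁻¹ • x)))
      x := by
  unfold adaptiveNormLoss
  have hs := hasGradientAt_cosineSimilarity hμ hx
  have hinner := (hasGradientAt_norm hx).sub
    ((((hasDerivAt_pow 2 _).comp_hasGradientAt hs).mul_const α).mul_const r_id)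
  convert (hasDerivAt_pow 2 _).comp_hasGradientAt hinner using 1
  match_scalars <;> field_simp <;> ring

end GradientCalculus

theorem gradient_adaptive_norm_loss_general (p : ℕ)
    (μ h : EuclideanSpace ℝ (Fin p)) (hμ : μ ≠ 0) (hh : h ≠ 0)
    (α r_id r s t : ℝ) (hr : r = ‖h‖)
    (hs : s = (inner ℝ h μ : ℝ) / (‖h‖ * ‖μ‖)) (ht : t = s ^ 2 * α * r_id) :
    DifferentiableAt ℝ
      (fun x : EuclideanSpace ℝ (Fin p) =>
        (‖x‖ - ((inner ℝ x μ : ℝ) / (‖x‖ * ‖μ‖)) ^ 2 * α * r_id) ^ 2) h ∧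
    gradient
      (fun x : EuclideanSpace ℝ (Fin p) =>
        (‖x‖ - ((inner ℝ x μ : ℝ) / (‖x‖ * ‖μ‖)) ^ 2 * α * r_id) ^ 2) h =
      (2 * (r - t)) • (r⁻¹ • h) -
        (4 * s * (r - t) * α * r_id / (r * ‖μ‖)) • (μ - (s * ‖μ‖) • (r⁻¹ • h)) := by
  subst hr hs ht
  have hL := hasGradientAt_adaptiveNormLoss hμ hh α r_id
  exact ⟨hL.differentiableAt, hL.gradient⟩

/-- Full gradient decomposition of the GEODE angle-adaptive norm loss
`L(h) = (‖h‖ - s(h)²·α·r_id)²` with `s(h) = ⟨h, μ⟩/(‖h‖·‖μ‖)` for a fixed nonzero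
class mean `μ`: `L` is differentiable at every `h ≠ 0` and, writing `r = ‖h‖`,
`ĥ = r⁻¹ • h`, `s = s(h)`, `t = s²·α·r_id`,
`∇L(h) = 2(r - t)·ĥ - (4·s·(r - t)·α·r_id/(r·‖μ‖)) · (μ - s·‖μ‖·ĥ)`. -/
theorem gradient_adaptive_norm_loss (p : ℕ) (hp : 1 ≤ p)
    (μ h : EuclideanSpace ℝ (Fin p)) (hμ : μ ≠ 0) (hh : h ≠ 0)
    (α r_id r s t : ℝ) (hr : r = ‖h‖)
    (hs : s = (inner ℝ h μ : ℝ) / (‖h‖ * ‖μ‖)) (ht : t = s ^ 2 * α * r_id) :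
    DifferentiableAt ℝ
      (fun x : EuclideanSpace ℝ (Fin p) =>
        (‖x‖ - ((inner ℝ x μ : ℝ) / (‖x‖ * ‖μ‖)) ^ 2 * α * r_id) ^ 2) h ∧
    gradient
      (fun x : EuclideanSpace ℝ (Fin p) =>
        (‖x‖ - ((inner ℝ x μ : ℝ) / (‖x‖ * ‖μ‖)) ^ 2 * α * r_id) ^ 2) h =
      (2 * (r - t)) • (r⁻¹ • h) -
        (4 * s * (r - t) * α * r_id / (r * ‖μ‖)) • (μ - (s * ‖μ‖) • (r⁻¹ • h)) :=
  gradient_adaptive_norm_loss_general p μ h hμ hh α r_id r s t hr hs ht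
end
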